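/- Let H be a quasi-Hopf algebra with bijective antipode, p_L = p̃¹⊗p̃² = X²S⁻¹(X¹β) ⊗ X³, f the Drinfel'd twist, and Ṽ := S(p̃²)f¹ ⊗ S(p̃¹)f² ∈ H⊗H. Then for all h ∈ H: (S(h) ⊗ 1)·Ṽ = (1 ⊗ h₁)·Ṽ·Δ(S(h₂)). -/

import Mathlib

/-!
Apply the anti-multiplicative map `(S ⊗ S) ∘ τ` to the identity
`Δ(h₂) p_L (S⁻¹(h₁) ⊗ 1) = p_L (1 ⊗ h)` and multiply by `f` on the right; the twist relation
`(S ⊗ S)(Δᶜᵒᵖ(h₂)) f = f Δ(S(h₂))` then produces `(1 ⊗ h₁) Ṽ Δ(S(h₂))` on one side and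
`(S(h) ⊗ 1) Ṽ` on the other.

The identity for `p_L` comes from writing `p_L` as the image of `Φ` under
`u ⊗ v ⊗ w ↦ v S⁻¹(uβ) ⊗ w`, which sends `t · s` to `t²·(image of s)·(S⁻¹(t¹) ⊗ 1)`.
By quasi-coassociativity `(id ⊗ Δ)Δ(h) · Φ = Φ · (Δ ⊗ id)Δ(h)`, and on the right
`Σ h₂ S⁻¹(h₁β) = ε(h) S⁻¹(β)` collapses `(Δ ⊗ id)Δ(h)` to `S⁻¹(β) ⊗ h`.
-/

open TensorProduct

noncomputable section

/-- A quasi-Hopf algebra structure (Drinfel'd) on a `k`-algebra `H`: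
an algebra-map coproduct `comul`, an algebra-map counit, an invertible
associator `assoc ∈ H⊗H⊗H`, elements `α, β` and an anti-multiplicative
antipode, satisfying (2.1)–(2.6) of the paper. -/
structure QuasiHopfAlgebra (k H : Type*) [CommRing k] [Ring H] [Algebra k H] where
  /-- the coproduct, an algebra map `H → H ⊗ H` -/
  comul : H →ₐ[k] H ⊗[k] H
  /-- the counit, an algebra map `H → k` -/
  counit : H →ₐ[k] k
  /-- the associator `Φ` -/
  assoc : H ⊗[k] (H ⊗[k] H)
  /-- the inverse `Φ⁻¹` of the associator -/
  assocInv : H ⊗[k] (H ⊗[k] H)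
  /-- the antipode `S` -/
  antipode : H →ₗ[k] H
  /-- the element `α` -/
  alpha : H
  /-- the element `β` -/
  beta : H
  antipode_one : antipode 1 = 1
  antipode_mul : ∀ a b : H, antipode (a * b) = antipode b * antipode a
  assoc_mul_inv : assoc * assocInv = 1
  inv_mul_assoc : assocInv * assoc = 1
  /-- (2.1): quasi-coassociativity `(id ⊗ Δ)Δ(h) = Φ ((Δ ⊗ id)Δ(h)) Φ⁻¹` -/
  quasi_coassoc : ∀ h : H,
    TensorProduct.map LinearMap.id comul.toLinearMap (comul h)
      = assoc * (TensorProduct.assoc k H H H)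
          (TensorProduct.map comul.toLinearMap LinearMap.id (comul h)) * assocInv
  /-- (2.2): left counit axiom -/
  counit_comul : ∀ h : H,
    (TensorProduct.lid k H) (TensorProduct.map counit.toLinearMap LinearMap.id (comul h)) = h
  /-- (2.2): right counit axiom -/
  comul_counit : ∀ h : H,
    (TensorProduct.rid k H) (TensorProduct.map LinearMap.id counit.toLinearMap (comul h)) = h
  /-- (2.3): the pentagon axiom
  `(1 ⊗ Φ)·((id ⊗ Δ ⊗ id)Φ)·(Φ ⊗ 1) = ((id ⊗ id ⊗ Δ)Φ)·((Δ ⊗ id ⊗ id)Φ)` -/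
  pentagon :
    ((1 : H) ⊗ₜ[k] assoc)
      * (TensorProduct.map LinearMap.id (TensorProduct.assoc k H H H).toLinearMap
          (TensorProduct.map LinearMap.id
            (TensorProduct.map comul.toLinearMap LinearMap.id) assoc))
      * (TensorProduct.map LinearMap.id (TensorProduct.assoc k H H H).toLinearMap
          ((TensorProduct.assoc k H (H ⊗[k] H) H) (assoc ⊗ₜ[k] (1 : H))))
    = (TensorProduct.map LinearMap.id
          (TensorProduct.map LinearMap.id comul.toLinearMap) assoc)
      * ((TensorProduct.assoc k H H (H ⊗[k] H))
          (TensorProduct.map comul.toLinearMap LinearMap.id assoc))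
  /-- (2.4): `(id ⊗ ε ⊗ id)(Φ) = 1 ⊗ 1` -/
  counit_assoc :
    TensorProduct.map LinearMap.id
      ((TensorProduct.lid k H).toLinearMap ∘ₗ
        TensorProduct.map counit.toLinearMap LinearMap.id) assoc = 1
  /-- (2.5): `Σ S(h₁) α h₂ = ε(h) α` -/
  antipode_left : ∀ h : H,
    LinearMap.mul' k H
      (TensorProduct.map (LinearMap.mulRight k alpha ∘ₗ antipode) LinearMap.id (comul h))
      = counit h • alpha
  /-- (2.5): `Σ h₁ β S(h₂) = ε(h) β` -/
  antipode_right : ∀ h : H,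
    LinearMap.mul' k H
      (TensorProduct.map LinearMap.id (LinearMap.mulLeft k beta ∘ₗ antipode) (comul h))
      = counit h • beta
  /-- (2.6): `X¹ β S(X²) α X³ = 1` -/
  assoc_antipode_left :
    LinearMap.mul' k H
      (TensorProduct.map LinearMap.id
        (LinearMap.mul' k H ∘ₗ
          TensorProduct.map
            (LinearMap.mulRight k alpha ∘ₗ LinearMap.mulLeft k beta ∘ₗ antipode)
            LinearMap.id)
        assoc) = 1
  /-- (2.6): `S(x¹) α x² β S(x³) = 1` -/
  assoc_antipode_right :
    LinearMap.mul' k H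
      (TensorProduct.map antipode
        (LinearMap.mul' k H ∘ₗ
          TensorProduct.map
            (LinearMap.mulRight k beta ∘ₗ LinearMap.mulLeft k alpha)
            antipode)
        assocInv) = 1

variable {k H : Type*} [CommRing k] [Ring H] [Algebra k H]

/-- `p_L = X²S⁻¹(X¹β) ⊗ X³`, built from the associator. -/
def pL (Q : QuasiHopfAlgebra k H) (Sinv : H →ₗ[k] H) : H ⊗[k] H :=
  TensorProduct.lift
    { toFun := fun x1 =>
        TensorProduct.map (LinearMap.mulRight k (Sinv (x1 * Q.beta))) LinearMap.id
      map_add' := fun x y => by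
        have : LinearMap.mulRight k (Sinv ((x + y) * Q.beta))
            = LinearMap.mulRight k (Sinv (x * Q.beta))
              + LinearMap.mulRight k (Sinv (y * Q.beta)) := by
          ext a; simp [add_mul, map_add, mul_add]
        rw [this, TensorProduct.map_add_left]
      map_smul' := fun c x => by
        have : LinearMap.mulRight k (Sinv ((c • x) * Q.beta))
            = c • LinearMap.mulRight k (Sinv (x * Q.beta)) := by
          ext a; simp [smul_mul_assoc, map_smul, mul_smul_comm]
        rw [this, TensorProduct.map_smul_left]
        rfl }
    Q.assoc

/-- `Ṽ = S(p̃²)f¹ ⊗ S(p̃¹)f² = (S ⊗ S)(swap p_L) · f`. -/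
def Vel (Q : QuasiHopfAlgebra k H) (Sinv : H →ₗ[k] H) (f : H ⊗[k] H) : H ⊗[k] H :=
  TensorProduct.map Q.antipode Q.antipode ((TensorProduct.comm k H H) (pL Q Sinv)) * f

/-- The right-hand side `Σ (1 ⊗ h₁) · Ṽ · Δ(S(h₂))` as a linear map in `h₁ ⊗ h₂`. -/
def rhs13 (Q : QuasiHopfAlgebra k H) (V : H ⊗[k] H) : H ⊗[k] H →ₗ[k] H ⊗[k] H :=
  TensorProduct.lift (LinearMap.mk₂ k
    (fun h1 h2 => ((1 : H) ⊗ₜ[k] h1) * V * Q.comul (Q.antipode h2))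
    (fun h1 h1' h2 => by simp [TensorProduct.tmul_add, add_mul])
    (fun c h1 h2 => by
      rw [show ((1 : H) ⊗ₜ[k] (c • h1)) = c • ((1 : H) ⊗ₜ[k] h1) from
        (TensorProduct.tmul_smul c 1 h1), smul_mul_assoc, smul_mul_assoc])
    (fun h1 h2 h2' => by simp [map_add, mul_add])
    (fun c h1 h2 => by simp [map_smul, mul_smul_comm]))

namespace QuasiHopfAlgebra

variable (Q : QuasiHopfAlgebra k H) (Sinv : H →ₗ[k] H)

lemma antipodeInv_mul (hS1 : ∀ a : H, Sinv (Q.antipode a) = a)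
    (hS2 : ∀ a : H, Q.antipode (Sinv a) = a) (a b : H) :
    Sinv (a * b) = Sinv b * Sinv a := by
  rw [← hS1 (Sinv b * Sinv a), Q.antipode_mul, hS2, hS2]

def leftContract : H ⊗[k] H →ₗ[k] H :=
  TensorProduct.lift (LinearMap.mk₂ k (fun u v => v * Sinv (u * Q.beta))
    (fun u u' v => by simp [add_mul, mul_add])
    (fun c u v => by simp)
    (fun u v v' => by simp [add_mul])
    (fun c u v => by simp))

@[simp] lemma leftContract_tmul (u v : H) :
    Q.leftContract Sinv (u ⊗ₜ[k] v) = v * Sinv (u * Q.beta) := by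
  simp [leftContract]

lemma leftContract_comul (hS1 : ∀ a : H, Sinv (Q.antipode a) = a)
    (hS2 : ∀ a : H, Q.antipode (Sinv a) = a) (x : H) :
    Q.leftContract Sinv (Q.comul x) = Q.counit x • Sinv Q.beta := by
  have hS : Q.antipode ∘ₗ Q.leftContract Sinv
      = LinearMap.mul' k H ∘ₗ TensorProduct.map LinearMap.id
          (LinearMap.mulLeft k Q.beta ∘ₗ Q.antipode) :=
    TensorProduct.ext' fun u v => by simp [Q.antipode_mul, hS2, mul_assoc]
  rw [← hS1 (Q.leftContract Sinv (Q.comul x)), ← LinearMap.comp_apply Q.antipode, hS,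
    LinearMap.comp_apply, Q.antipode_right, map_smul]

def pLMap : H ⊗[k] (H ⊗[k] H) →ₗ[k] H ⊗[k] H :=
  TensorProduct.map (Q.leftContract Sinv) LinearMap.id ∘ₗ
    (TensorProduct.assoc k H H H).symm.toLinearMap

@[simp] lemma pLMap_tmul (u v w : H) :
    Q.pLMap Sinv (u ⊗ₜ[k] (v ⊗ₜ[k] w)) = (v * Sinv (u * Q.beta)) ⊗ₜ[k] w := by
  simp [pLMap]

lemma pL_eq_pLMap : pL Q Sinv = Q.pLMap Sinv Q.assoc := by
  unfold pL
  congr 1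
  exact TensorProduct.ext_threefold' fun u v w => by simp

def twistedMul : H ⊗[k] (H ⊗[k] H) →ₗ[k] (H ⊗[k] H) →ₗ[k] (H ⊗[k] H) :=
  TensorProduct.lift (LinearMap.mk₂ k
    (fun p q => LinearMap.mulLeft k q ∘ₗ LinearMap.mulRight k (Sinv p ⊗ₜ[k] (1 : H)))
    (fun p p' q => LinearMap.ext fun z => by simp [TensorProduct.add_tmul, mul_add])
    (fun c p q => LinearMap.ext fun z => by simp [← TensorProduct.smul_tmul'])
    (fun p q q' => LinearMap.ext fun z => by simp [add_mul])
    (fun c p q => LinearMap.ext fun z => by simp))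

@[simp] lemma twistedMul_tmul (p : H) (q z : H ⊗[k] H) :
    twistedMul Sinv (p ⊗ₜ[k] q) z = q * (z * (Sinv p ⊗ₜ[k] (1 : H))) := by
  simp [twistedMul]

lemma pLMap_mul (hSinv : ∀ a b : H, Sinv (a * b) = Sinv b * Sinv a)
    (t s : H ⊗[k] (H ⊗[k] H)) :
    Q.pLMap Sinv (t * s) = twistedMul Sinv t (Q.pLMap Sinv s) := by
  have : (LinearMap.mul k (H ⊗[k] (H ⊗[k] H))).compr₂ (Q.pLMap Sinv)
      = (twistedMul Sinv).compl₂ (Q.pLMap Sinv) := by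
    refine TensorProduct.ext_threefold' fun u v w => TensorProduct.ext_threefold' fun u' v' w' => ?_
    simp [Algebra.TensorProduct.tmul_mul_tmul, hSinv, mul_assoc]
  exact LinearMap.congr_fun₂ this t s

lemma twistedMul_mul_one_tmul (t : H ⊗[k] (H ⊗[k] H)) (z : H ⊗[k] H) (h : H) :
    twistedMul Sinv t (z * ((1 : H) ⊗ₜ[k] h)) = twistedMul Sinv t z * ((1 : H) ⊗ₜ[k] h) := by
  induction t using TensorProduct.induction_on with
  | zero => simp
  | add t₁ t₂ h₁ h₂ => simp [add_mul, h₁, h₂]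
  | tmul p q =>
    have hcomm : Commute ((1 : H) ⊗ₜ[k] h) (Sinv p ⊗ₜ[k] (1 : H)) := by
      simp [Commute, SemiconjBy, Algebra.TensorProduct.tmul_mul_tmul]
    simp only [twistedMul_tmul, mul_assoc, hcomm.eq]

lemma pLMap_assoc_map_comul (hS1 : ∀ a : H, Sinv (Q.antipode a) = a)
    (hS2 : ∀ a : H, Q.antipode (Sinv a) = a) (y : H ⊗[k] H) :
    Q.pLMap Sinv (TensorProduct.assoc k H H H (TensorProduct.map Q.comul.toLinearMap
        LinearMap.id y))
      = Sinv Q.beta ⊗ₜ[k] TensorProduct.lid k H (TensorProduct.map Q.counit.toLinearMap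
          LinearMap.id y) := by
  induction y using TensorProduct.induction_on with
  | zero => simp
  | add y₁ y₂ h₁ h₂ => simp only [map_add, h₁, h₂, TensorProduct.tmul_add]
  | tmul x w =>
    simp [pLMap, Q.leftContract_comul Sinv hS1 hS2, TensorProduct.smul_tmul',
      TensorProduct.tmul_smul]

lemma pLMap_map_comul_tmul_mul_assoc (hS1 : ∀ a : H, Sinv (Q.antipode a) = a)
    (hS2 : ∀ a : H, Q.antipode (Sinv a) = a) (a b : H) :
    Q.pLMap Sinv (TensorProduct.map LinearMap.id Q.comul.toLinearMap (a ⊗ₜ[k] b) * Q.assoc)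
      = Q.comul b * pL Q Sinv * (Sinv a ⊗ₜ[k] (1 : H)) := by
  rw [TensorProduct.map_tmul, Q.pLMap_mul Sinv (Q.antipodeInv_mul Sinv hS1 hS2),
    ← pL_eq_pLMap, LinearMap.id_apply, AlgHom.toLinearMap_apply, twistedMul_tmul, mul_assoc]

/-- The identity `Δ(h₂) p_L (S⁻¹(h₁) ⊗ 1) = p_L (1 ⊗ h)`: by
`pLMap_map_comul_tmul_mul_assoc`, its left-hand side is `pLMap ((id ⊗ Δ)(Δ h) · Φ)`. -/
lemma pLMap_map_comul_comul_mul_assoc (hS1 : ∀ a : H, Sinv (Q.antipode a) = a)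
    (hS2 : ∀ a : H, Q.antipode (Sinv a) = a) (h : H) :
    Q.pLMap Sinv (TensorProduct.map LinearMap.id Q.comul.toLinearMap (Q.comul h) * Q.assoc)
      = pL Q Sinv * ((1 : H) ⊗ₜ[k] h) := by
  have hΦ : TensorProduct.map LinearMap.id Q.comul.toLinearMap (Q.comul h) * Q.assoc
      = Q.assoc * TensorProduct.assoc k H H H
          (TensorProduct.map Q.comul.toLinearMap LinearMap.id (Q.comul h)) := by
    rw [Q.quasi_coassoc, mul_assoc _ Q.assocInv, Q.inv_mul_assoc, mul_one]
  have hβ : Sinv Q.beta ⊗ₜ[k] h = Q.pLMap Sinv 1 * ((1 : H) ⊗ₜ[k] h) := by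
    simp [Algebra.TensorProduct.one_def, Algebra.TensorProduct.tmul_mul_tmul]
  rw [hΦ, Q.pLMap_mul Sinv (Q.antipodeInv_mul Sinv hS1 hS2),
    Q.pLMap_assoc_map_comul Sinv hS1 hS2, Q.counit_comul, hβ, twistedMul_mul_one_tmul,
    ← Q.pLMap_mul Sinv (Q.antipodeInv_mul Sinv hS1 hS2), mul_one, pL_eq_pLMap]

def antipodeSwap : H ⊗[k] H →ₗ[k] H ⊗[k] H :=
  TensorProduct.map Q.antipode Q.antipode ∘ₗ (TensorProduct.comm k H H).toLinearMap

@[simp] lemma antipodeSwap_tmul (a b : H) :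
    Q.antipodeSwap (a ⊗ₜ[k] b) = Q.antipode b ⊗ₜ[k] Q.antipode a := by
  simp [antipodeSwap]

lemma antipodeSwap_mul (x y : H ⊗[k] H) :
    Q.antipodeSwap (x * y) = Q.antipodeSwap y * Q.antipodeSwap x := by
  have : (LinearMap.mul k (H ⊗[k] H)).compr₂ Q.antipodeSwap
      = ((LinearMap.mul k (H ⊗[k] H)).flip.compl₁₂ Q.antipodeSwap Q.antipodeSwap) :=
    TensorProduct.ext' fun a b => TensorProduct.ext' fun c d => by
      simp [Algebra.TensorProduct.tmul_mul_tmul, Q.antipode_mul]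
  exact LinearMap.congr_fun₂ this x y

lemma antipodeSwap_comul_mul_twist (f g : H ⊗[k] H) (hgf : g * f = 1)
    (htwist : ∀ h : H, f * Q.comul (Q.antipode h) * g
        = TensorProduct.map Q.antipode Q.antipode ((TensorProduct.comm k H H) (Q.comul h)))
    (h : H) :
    Q.antipodeSwap (Q.comul h) * f = f * Q.comul (Q.antipode h) := by
  rw [antipodeSwap, LinearMap.comp_apply, LinearEquiv.coe_coe, ← htwist, mul_assoc, hgf,
    mul_one]

lemma rhs13_eq_antipodeSwap_pLMap (hS1 : ∀ a : H, Sinv (Q.antipode a) = a)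
    (hS2 : ∀ a : H, Q.antipode (Sinv a) = a) (f g : H ⊗[k] H) (hgf : g * f = 1)
    (htwist : ∀ h : H, f * Q.comul (Q.antipode h) * g
        = TensorProduct.map Q.antipode Q.antipode ((TensorProduct.comm k H H) (Q.comul h)))
    (x : H ⊗[k] H) :
    rhs13 Q (Vel Q Sinv f) x = Q.antipodeSwap (Q.pLMap Sinv
        (TensorProduct.map LinearMap.id Q.comul.toLinearMap x * Q.assoc)) * f := by
  induction x using TensorProduct.induction_on with
  | zero => simp
  | add x₁ x₂ h₁ h₂ => simp only [map_add, add_mul, h₁, h₂]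
  | tmul a b =>
    rw [Q.pLMap_map_comul_tmul_mul_assoc Sinv hS1 hS2, Q.antipodeSwap_mul, Q.antipodeSwap_mul,
      mul_assoc, mul_assoc, Q.antipodeSwap_comul_mul_twist f g hgf htwist]
    simp [rhs13, Vel, antipodeSwap, hS2, Q.antipode_one, mul_assoc]

end QuasiHopfAlgebra

theorem stmt_13_general (Q : QuasiHopfAlgebra k H) (Sinv : H →ₗ[k] H)
    (hS1 : ∀ a : H, Sinv (Q.antipode a) = a)
    (hS2 : ∀ a : H, Q.antipode (Sinv a) = a)
    (f g : H ⊗[k] H) (hgf : g * f = 1)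
    (htwist : ∀ h : H,
      f * Q.comul (Q.antipode h) * g
        = TensorProduct.map Q.antipode Q.antipode
            ((TensorProduct.comm k H H) (Q.comul h))) :
    ∀ h : H,
      (Q.antipode h ⊗ₜ[k] (1 : H)) * Vel Q Sinv f
        = rhs13 Q (Vel Q Sinv f) (Q.comul h) := by
  intro h
  rw [Q.rhs13_eq_antipodeSwap_pLMap Sinv hS1 hS2 f g hgf htwist,
    Q.pLMap_map_comul_comul_mul_assoc Sinv hS1 hS2, Q.antipodeSwap_mul, mul_assoc]
  simp [Vel, QuasiHopfAlgebra.antipodeSwap, Q.antipode_one]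

/-- for a quasi-Hopf algebra `H` with bijective antipode and
Drinfel'd twist `f`, the element `Ṽ = S(p̃²)f¹ ⊗ S(p̃¹)f²` satisfies
`(S(h) ⊗ 1)·Ṽ = (1 ⊗ h₁)·Ṽ·Δ(S(h₂))` for all `h ∈ H`. -/
theorem stmt_13 (Q : QuasiHopfAlgebra k H) (Sinv : H →ₗ[k] H)
    (hS1 : ∀ a : H, Sinv (Q.antipode a) = a)
    (hS2 : ∀ a : H, Q.antipode (Sinv a) = a)
    (f g : H ⊗[k] H) (hfg : f * g = 1) (hgf : g * f = 1)
    (htwist : ∀ h : H,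
      f * Q.comul (Q.antipode h) * g
        = TensorProduct.map Q.antipode Q.antipode
            ((TensorProduct.comm k H H) (Q.comul h))) :
    ∀ h : H,
      (Q.antipode h ⊗ₜ[k] (1 : H)) * Vel Q Sinv f
        = rhs13 Q (Vel Q Sinv f) (Q.comul h) :=
  stmt_13_general Q Sinv hS1 hS2 f g hgf htwist

end
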